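/- Parabolic Hölder bound for diagonal integrals of second derivatives: let α ∈ (0,1), 0 < δ ≤ 1, and let w ∈ Θ^{(2+α)}_{[0,δ]} be such that for each t ∈ [0,δ] the function w(t,·,·) has continuous partial derivatives w_s, w_{y_i}, w_{y_iy_j} on [0,t]×ℝ^d. Then for each t ∈ [0,δ] and each pair i,j ∈ {1,…,d}, the function (s,y) ↦ ∫_s^t w_{y_iy_j}(θ,s,y)dθ on [0,t]×ℝ^d satisfies |∫_·^t w_{y_iy_j}(θ,·,·)dθ|^{(α)}_{[0,t]×ℝ^d} ≤ 4 δ^{1−α/2} [w]^{(2+α)}_{[0,δ]}. -/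

import Mathlib

/-!
Write `F(s,y) = ∫_s^t g(θ,s,y) dθ` with `g = w_{y_iy_j}` and `M = [w]^{(2+α)}_{[0,δ]}`, so that
every slice `g(θ,·,·)` has parabolic Hölder norm at most `M` on `[0,θ] × ℝ^d`. The sup norm and
the spatial Hölder quotient of `F` are then at most `(t - s) M ≤ δ M`. For the time quotient with
`a < b`, split `F(a) - F(b) = ∫_a^b g(θ,a) dθ + ∫_b^t (g(θ,a) - g(θ,b)) dθ`: the first piece is at
most `(b - a) M ≤ δ^{1-α/2} (b - a)^{α/2} M`, the second at most `δ (b - a)^{α/2} M`. Since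
`δ ≤ 1`, `δ ≤ δ^{1-α/2}`, and the four contributions add up to `4 δ^{1-α/2} M`.
-/
open Set MeasureTheory
open scoped ENNReal BigOperators

noncomputable section

/-- `ℝ^d`. -/
abbrev Vec (d : ℕ) := Fin d → ℝ

/-- `d × d` real matrices, encoded as nested functions. -/
abbrev Mat (d : ℕ) := Fin d → Fin d → ℝ

variable {d : ℕ}

/-- Partial derivative in the external time parameter `t` of `u(t,s,y)`. -/
def pt (u : ℝ → ℝ → Vec d → ℝ) : ℝ → ℝ → Vec d → ℝ :=
  fun t s y => deriv (fun t' => u t' s y) t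

/-- Partial derivative in the running time `s` of `u(t,s,y)`. -/
def ps (u : ℝ → ℝ → Vec d → ℝ) : ℝ → ℝ → Vec d → ℝ :=
  fun t s y => deriv (fun s' => u t s' y) s

/-- Partial derivative in the `i`-th space coordinate of `u(t,s,y)`. -/
def py (i : Fin d) (u : ℝ → ℝ → Vec d → ℝ) : ℝ → ℝ → Vec d → ℝ :=
  fun t s y => deriv (fun r => u t s (Function.update y i r)) (y i)

/-- Second-order spatial partial derivative of `u(t,s,y)`. -/
def pyy (i j : Fin d) (u : ℝ → ℝ → Vec d → ℝ) : ℝ → ℝ → Vec d → ℝ :=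
  py i (py j u)

/-- Derivative in the first (time) variable of a two-argument function `φ`. -/
def qs (φ : ℝ → Vec d → ℝ) : ℝ → Vec d → ℝ :=
  fun s y => deriv (fun s' => φ s' y) s

/-- Derivative in the `i`-th space coordinate of a two-argument function `φ`. -/
def qy (i : Fin d) (φ : ℝ → Vec d → ℝ) : ℝ → Vec d → ℝ :=
  fun s y => deriv (fun r => φ s (Function.update y i r)) (y i)

/-- Second-order spatial derivative of a two-argument function `φ`. -/
def qyy (i j : Fin d) (φ : ℝ → Vec d → ℝ) : ℝ → Vec d → ℝ := qy i (qy j φ)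

/-- Sup-norm `|φ|^∞` of `φ` over `[a,b] × ℝ^d`, valued in `ℝ≥0∞`. -/
def supN (a b : ℝ) (φ : ℝ → Vec d → ℝ) : ℝ≥0∞ :=
  ⨆ s ∈ Set.Icc a b, ⨆ y : Vec d, ENNReal.ofReal |φ s y|

/-- Hölder (exponent `α/2`) seminorm of `φ` in the time variable over `[a,b] × ℝ^d`. -/
def semiS (α a b : ℝ) (φ : ℝ → Vec d → ℝ) : ℝ≥0∞ :=
  ⨆ s ∈ Set.Icc a b, ⨆ s' ∈ Set.Icc a b, ⨆ (_ : s ≠ s'), ⨆ y : Vec d,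
    ENNReal.ofReal (|φ s y - φ s' y| / |s - s'| ^ (α / 2))

/-- Hölder (exponent `α`) seminorm of `φ` in the space variable over `[a,b] × ℝ^d`. -/
def semiY (α a b : ℝ) (φ : ℝ → Vec d → ℝ) : ℝ≥0∞ :=
  ⨆ s ∈ Set.Icc a b, ⨆ y : Vec d, ⨆ y' : Vec d, ⨆ (_ : y ≠ y'),
    ENNReal.ofReal (|φ s y - φ s y'| / ‖y - y'‖ ^ α)

/-- The parabolic Hölder norm `|·|^{(α)}_{[a,b]×ℝ^d}`. -/
def hN (α a b : ℝ) (φ : ℝ → Vec d → ℝ) : ℝ≥0∞ :=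
  supN a b φ + semiS α a b φ + semiY α a b φ

/-- The parabolic Hölder norm `|·|^{(2+α)}_{[a,b]×ℝ^d}`. -/
def h2N (α a b : ℝ) (φ : ℝ → Vec d → ℝ) : ℝ≥0∞ :=
  supN a b φ + hN α a b (qs φ) + (∑ i : Fin d, supN a b (qy i φ)) +
    ∑ i : Fin d, ∑ j : Fin d, hN α a b (qyy i j φ)

/-- The norm `[φ]^{(α)}_{[0,δ]}`. -/
def brA (α δ : ℝ) (u : ℝ → ℝ → Vec d → ℝ) : ℝ≥0∞ :=
  ⨆ t ∈ Set.Icc (0:ℝ) δ, hN α 0 t (u t)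

/-- The norm `[φ]^{(2+α)}_{[0,δ]}`. -/
def br2 (α δ : ℝ) (u : ℝ → ℝ → Vec d → ℝ) : ℝ≥0∞ :=
  ⨆ t ∈ Set.Icc (0:ℝ) δ, h2N α 0 t (u t)

/-- The norm `‖φ‖^{(α)}_{[0,δ]}`. -/
def barA (α δ : ℝ) (u : ℝ → ℝ → Vec d → ℝ) : ℝ≥0∞ :=
  ⨆ t ∈ Set.Icc (0:ℝ) δ, (hN α 0 t (u t) + hN α 0 t (pt u t))

/-- The norm `‖φ‖^{(2+α)}_{[0,δ]}`. -/
def bar2 (α δ : ℝ) (u : ℝ → ℝ → Vec d → ℝ) : ℝ≥0∞ :=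
  ⨆ t ∈ Set.Icc (0:ℝ) δ, (h2N α 0 t (u t) + h2N α 0 t (pt u t))

/-- The triangular time-space domain `Δ[0,δ] × ℝ^d`. -/
def Tri (d : ℕ) (δ : ℝ) : Set (ℝ × ℝ × Vec d) :=
  {p | 0 ≤ p.2.1 ∧ p.2.1 ≤ p.1 ∧ p.1 ≤ δ}

/-- Joint continuity on `Δ[0,δ] × ℝ^d`. -/
def ContOnTri (δ : ℝ) (u : ℝ → ℝ → Vec d → ℝ) : Prop :=
  ContinuousOn (fun p : ℝ × ℝ × Vec d => u p.1 p.2.1 p.2.2) (Tri d δ)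

/-- Existence of the first derivative in `s` and first and second derivatives in `y`. -/
def DiffSY (δ : ℝ) (u : ℝ → ℝ → Vec d → ℝ) : Prop :=
  ∀ t s y, 0 ≤ s → s ≤ t → t ≤ δ →
    DifferentiableAt ℝ (fun s' => u t s' y) s ∧
    (∀ i : Fin d, DifferentiableAt ℝ (fun r => u t s (Function.update y i r)) (y i)) ∧
    (∀ i j : Fin d, DifferentiableAt ℝ (fun r => py j u t s (Function.update y i r)) (y i))

/-- `u` is of class `C^{1,2}` in `(s,y)` on the triangle, with jointly continuous derivatives. -/
def ClassicalOn (δ : ℝ) (u : ℝ → ℝ → Vec d → ℝ) : Prop :=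
  ContOnTri δ u ∧ DiffSY δ u ∧ ContOnTri δ (ps u) ∧
    (∀ i : Fin d, ContOnTri δ (py i u)) ∧ ∀ i j : Fin d, ContOnTri δ (pyy i j u)

/-- Differentiability in the parameter `t` on the triangle. -/
def DiffT (δ : ℝ) (u : ℝ → ℝ → Vec d → ℝ) : Prop :=
  ∀ t s y, 0 ≤ s → s ≤ t → t ≤ δ → DifferentiableAt ℝ (fun t' => u t' s y) t

/-- Membership in `Θ^{(α)}_{[0,δ]}`. -/
def MemThetaA (α δ : ℝ) (u : ℝ → ℝ → Vec d → ℝ) : Prop :=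
  ContOnTri δ u ∧ brA α δ u < ⊤

/-- Membership in `Θ^{(2+α)}_{[0,δ]}`. -/
def MemTheta2 (α δ : ℝ) (u : ℝ → ℝ → Vec d → ℝ) : Prop :=
  ClassicalOn δ u ∧ br2 α δ u < ⊤

/-- Membership in `Ω^{(α)}_{[0,δ]}`. -/
def MemOmegaA (α δ : ℝ) (u : ℝ → ℝ → Vec d → ℝ) : Prop :=
  ContOnTri δ u ∧ DiffT δ u ∧ ContOnTri δ (pt u) ∧ barA α δ u < ⊤

/-- Membership in `Ω^{(2+α)}_{[0,δ]}`. -/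
def MemOmega2 (α δ : ℝ) (u : ℝ → ℝ → Vec d → ℝ) : Prop :=
  ClassicalOn δ u ∧ DiffT δ u ∧ ClassicalOn δ (pt u) ∧ bar2 α δ u < ⊤

/-- Lift a function of `(t,y)` to a function of `(t,s,y)` constant in `s`. -/
def liftTY (g : ℝ → Vec d → ℝ) : ℝ → ℝ → Vec d → ℝ := fun t _ y => g t y

section HolderNorm

variable {α a b C : ℝ} {φ : ℝ → Vec d → ℝ}

lemma abs_le_of_hN_le (hC : 0 ≤ C) (h : hN α a b φ ≤ ENNReal.ofReal C) {s : ℝ}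
    (hs : s ∈ Icc a b) (y : Vec d) : |φ s y| ≤ C := by
  refine (ENNReal.ofReal_le_ofReal_iff hC).1 (le_trans ?_ h)
  calc ENNReal.ofReal |φ s y| ≤ supN a b φ := le_iSup₂_of_le s hs <| le_iSup_of_le y le_rfl
    _ ≤ hN α a b φ := le_self_add.trans le_self_add

lemma abs_sub_le_of_hN_le_time (hC : 0 ≤ C) (h : hN α a b φ ≤ ENNReal.ofReal C) {s s' : ℝ}
    (hs : s ∈ Icc a b) (hs' : s' ∈ Icc a b) (hne : s ≠ s') (y : Vec d) :
    |φ s y - φ s' y| ≤ C * |s - s'| ^ (α / 2) := by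
  have hpos : 0 < |s - s'| ^ (α / 2) :=
    Real.rpow_pos_of_pos (abs_pos.mpr (sub_ne_zero.mpr hne)) _
  rw [← div_le_iff₀ hpos]
  refine (ENNReal.ofReal_le_ofReal_iff hC).1 (le_trans ?_ h)
  calc ENNReal.ofReal (|φ s y - φ s' y| / |s - s'| ^ (α / 2)) ≤ semiS α a b φ :=
        le_iSup₂_of_le s hs <| le_iSup₂_of_le s' hs' <| le_iSup₂_of_le hne y le_rfl
    _ ≤ hN α a b φ := le_add_self.trans le_self_add

lemma abs_sub_le_of_hN_le_space (hC : 0 ≤ C) (h : hN α a b φ ≤ ENNReal.ofReal C) {s : ℝ}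
    (hs : s ∈ Icc a b) {y y' : Vec d} (hne : y ≠ y') :
    |φ s y - φ s y'| ≤ C * ‖y - y'‖ ^ α := by
  have hpos : 0 < ‖y - y'‖ ^ α :=
    Real.rpow_pos_of_pos (norm_pos_iff.mpr (sub_ne_zero.mpr hne)) α
  rw [← div_le_iff₀ hpos]
  refine (ENNReal.ofReal_le_ofReal_iff hC).1 (le_trans ?_ h)
  calc ENNReal.ofReal (|φ s y - φ s y'| / ‖y - y'‖ ^ α) ≤ semiY α a b φ :=
        le_iSup₂_of_le s hs <| le_iSup₂_of_le y y' <| le_iSup_of_le hne le_rfl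
    _ ≤ hN α a b φ := le_add_self

lemma hN_le_ofReal {A B : ℝ} (hA : 0 ≤ A) (hB : 0 ≤ B) (hC : 0 ≤ C)
    (hsup : ∀ s ∈ Icc a b, ∀ y, |φ s y| ≤ A)
    (htime : ∀ s ∈ Icc a b, ∀ s' ∈ Icc a b, s < s' → ∀ y,
      |φ s y - φ s' y| ≤ B * (s' - s) ^ (α / 2))
    (hspace : ∀ s ∈ Icc a b, ∀ y y', y ≠ y' → |φ s y - φ s y'| ≤ C * ‖y - y'‖ ^ α) :
    hN α a b φ ≤ ENNReal.ofReal (A + B + C) := by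
  rw [ENNReal.ofReal_add (add_nonneg hA hB) hC, ENNReal.ofReal_add hA hB]
  refine add_le_add (add_le_add ?_ ?_) ?_
  · exact iSup₂_le fun s hs => iSup_le fun y => ENNReal.ofReal_le_ofReal (hsup s hs y)
  · refine iSup₂_le fun s hs => iSup₂_le fun s' hs' => iSup_le fun hne => iSup_le fun y => ?_
    refine ENNReal.ofReal_le_ofReal ((div_le_iff₀ ?_).2 ?_)
    · exact Real.rpow_pos_of_pos (abs_pos.mpr (sub_ne_zero.mpr hne)) _
    rcases hne.lt_or_gt with hlt | hlt
    · rw [abs_sub_comm s s', abs_of_pos (sub_pos.2 hlt)]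
      exact htime s hs s' hs' hlt y
    · rw [abs_sub_comm, abs_of_pos (sub_pos.2 hlt)]
      exact htime s' hs' s hs hlt y
  · refine iSup₂_le fun s hs => iSup_le fun y => iSup_le fun y' => iSup_le fun hne => ?_
    refine ENNReal.ofReal_le_ofReal ((div_le_iff₀ ?_).2 (hspace s hs y y' hne))
    exact Real.rpow_pos_of_pos (norm_pos_iff.mpr (sub_ne_zero.mpr hne)) α

end HolderNorm

lemma abs_intervalIntegral_le_mul_sub {f : ℝ → ℝ} {a b C : ℝ} (hab : a ≤ b)
    (h : ∀ x ∈ Ioc a b, |f x| ≤ C) : |∫ x in a..b, f x| ≤ C * (b - a) := by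
  have := intervalIntegral.norm_integral_le_of_norm_le_const (f := f) (C := C)
    (by rw [uIoc_of_le hab]; exact h)
  rwa [abs_of_nonneg (sub_nonneg.2 hab)] at this

lemma le_rpow_mul_rpow {x δ α : ℝ} (hx : 0 ≤ x) (hxδ : x ≤ δ) (hα2 : α ≤ 2) :
    x ≤ δ ^ (1 - α / 2) * x ^ (α / 2) := by
  rcases hx.eq_or_lt with rfl | hx
  · exact mul_nonneg (Real.rpow_nonneg hxδ _) (Real.rpow_nonneg le_rfl _)
  calc x = x ^ (1 - α / 2) * x ^ (α / 2) := by rw [← Real.rpow_add hx]; norm_num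
    _ ≤ δ ^ (1 - α / 2) * x ^ (α / 2) := by
      gcongr
      linarith

lemma ContOnTri.intervalIntegrable {δ : ℝ} {g : ℝ → ℝ → Vec d → ℝ} (hg : ContOnTri δ g)
    {s a b : ℝ} (y : Vec d) (h0s : 0 ≤ s) (hsa : s ≤ a) (hab : a ≤ b) (hbδ : b ≤ δ) :
    IntervalIntegrable (fun θ => g θ s y) volume a b := by
  apply ContinuousOn.intervalIntegrable
  rw [uIcc_of_le hab]
  refine hg.comp (f := fun θ => (θ, s, y))
    (continuous_id.prodMk continuous_const).continuousOn fun θ hθ => ?_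
  exact ⟨h0s, hsa.trans hθ.1, hθ.2.trans hbδ⟩

section IntegralInParameter

variable {α δ M t : ℝ} {g : ℝ → ℝ → Vec d → ℝ} (hM : 0 ≤ M)
  (hg : ∀ θ ∈ Icc 0 δ, hN α 0 θ (g θ) ≤ ENNReal.ofReal M) (htδ : t ≤ δ)
include hM hg htδ

lemma abs_intervalIntegral_param_le {s : ℝ} (h0s : 0 ≤ s) (hst : s ≤ t) (y : Vec d) :
    |∫ θ in s..t, g θ s y| ≤ M * (t - s) :=
  abs_intervalIntegral_le_mul_sub hst fun θ hθ =>
    abs_le_of_hN_le hM (hg θ ⟨h0s.trans hθ.1.le, hθ.2.trans htδ⟩) ⟨h0s, hθ.1.le⟩ y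

lemma abs_intervalIntegral_param_sub_le_space (hcont : ContOnTri δ g) {s : ℝ} (h0s : 0 ≤ s)
    (hst : s ≤ t) {y y' : Vec d} (hne : y ≠ y') :
    |(∫ θ in s..t, g θ s y) - ∫ θ in s..t, g θ s y'| ≤ M * ‖y - y'‖ ^ α * (t - s) := by
  rw [← intervalIntegral.integral_sub (hcont.intervalIntegrable y h0s le_rfl hst htδ)
    (hcont.intervalIntegrable y' h0s le_rfl hst htδ)]
  exact abs_intervalIntegral_le_mul_sub hst fun θ hθ =>
    abs_sub_le_of_hN_le_space hM (hg θ ⟨h0s.trans hθ.1.le, hθ.2.trans htδ⟩) ⟨h0s, hθ.1.le⟩ hne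

lemma abs_intervalIntegral_param_sub_le_time (hcont : ContOnTri δ g) {a b : ℝ} (h0a : 0 ≤ a)
    (hab : a < b) (hbt : b ≤ t) (y : Vec d) :
    |(∫ θ in a..t, g θ a y) - ∫ θ in b..t, g θ b y| ≤
      M * (b - a) + M * (b - a) ^ (α / 2) * (t - b) := by
  have h0b : 0 ≤ b := h0a.trans hab.le
  have hsplit : (∫ θ in a..t, g θ a y) - ∫ θ in b..t, g θ b y =
      (∫ θ in a..b, g θ a y) + ∫ θ in b..t, (g θ a y - g θ b y) := by
    rw [intervalIntegral.integral_sub (hcont.intervalIntegrable y h0a hab.le hbt htδ)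
        (hcont.intervalIntegrable y h0b le_rfl hbt htδ),
      ← intervalIntegral.integral_add_adjacent_intervals
        (hcont.intervalIntegrable y h0a le_rfl hab.le (hbt.trans htδ))
        (hcont.intervalIntegrable y h0a hab.le hbt htδ)]
    ring
  have hfirst : |∫ θ in a..b, g θ a y| ≤ M * (b - a) :=
    abs_intervalIntegral_param_le hM hg (hbt.trans htδ) h0a hab.le y
  have hsecond : |∫ θ in b..t, (g θ a y - g θ b y)| ≤ M * (b - a) ^ (α / 2) * (t - b) := by
    refine abs_intervalIntegral_le_mul_sub hbt fun θ hθ => ?_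
    have := abs_sub_le_of_hN_le_time hM (hg θ ⟨h0b.trans hθ.1.le, hθ.2.trans htδ⟩)
      ⟨h0a, hab.le.trans hθ.1.le⟩ ⟨h0b, hθ.1.le⟩ hab.ne y
    rwa [abs_sub_comm a b, abs_of_pos (sub_pos.2 hab)] at this
  rw [hsplit]
  exact (abs_add_le _ _).trans (add_le_add hfirst hsecond)

lemma hN_intervalIntegral_param_le (hα0 : 0 ≤ α) (hα2 : α ≤ 2) (hδ1 : δ ≤ 1)
    (hcont : ContOnTri δ g) (h0t : 0 ≤ t) :
    hN α 0 t (fun s y => ∫ θ in s..t, g θ s y) ≤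
      ENNReal.ofReal (4 * δ ^ (1 - α / 2) * M) := by
  set R := δ ^ (1 - α / 2)
  have hδR : δ ≤ R := Real.self_le_rpow_of_le_one (h0t.trans htδ) hδ1 (by linarith)
  have hRM : 0 ≤ R * M := mul_nonneg (Real.rpow_nonneg (h0t.trans htδ) _) hM
  refine (hN_le_ofReal (A := R * M) (B := 2 * (R * M)) (C := R * M) hRM (by linarith) hRM
    ?_ ?_ ?_).trans_eq (by ring_nf)
  · intro s hs y
    refine (abs_intervalIntegral_param_le hM hg htδ hs.1 hs.2 y).trans ?_
    nlinarith [hs.1]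
  · intro a ha b hb hab y
    refine (abs_intervalIntegral_param_sub_le_time hM hg htδ hcont ha.1 hab hb.2 y).trans ?_
    have hba : b - a ≤ R * (b - a) ^ (α / 2) :=
      le_rpow_mul_rpow (sub_nonneg.2 hab.le) (by linarith [ha.1, hb.2]) hα2
    have hpow : 0 ≤ M * (b - a) ^ (α / 2) := mul_nonneg hM (Real.rpow_nonneg (by linarith) _)
    nlinarith [mul_le_mul_of_nonneg_left hba hM, hb.1]
  · intro s hs y y' hne
    refine (abs_intervalIntegral_param_sub_le_space hM hg htδ hcont hs.1 hs.2 hne).trans ?_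
    have hpow : 0 ≤ M * ‖y - y'‖ ^ α := mul_nonneg hM (Real.rpow_nonneg (norm_nonneg _) _)
    nlinarith [hs.1]

end IntegralInParameter

lemma hN_pyy_le_br2 {α δ θ : ℝ} (w : ℝ → ℝ → Vec d → ℝ) (i j : Fin d)
    (hθ : θ ∈ Icc 0 δ) : hN α 0 θ (pyy i j w θ) ≤ br2 α δ w := by
  calc hN α 0 θ (pyy i j w θ)
      ≤ ∑ i' : Fin d, ∑ j' : Fin d, hN α 0 θ (qyy i' j' (w θ)) :=
        (Finset.single_le_sum (f := fun j' => hN α 0 θ (qyy i j' (w θ)))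
          (fun _ _ => zero_le) (Finset.mem_univ j)).trans
        (Finset.single_le_sum (f := fun i' => ∑ j' : Fin d, hN α 0 θ (qyy i' j' (w θ)))
          (fun _ _ => zero_le) (Finset.mem_univ i))
    _ ≤ h2N α 0 θ (w θ) := le_add_self
    _ ≤ br2 α δ w := le_biSup (fun t => h2N α 0 t (w t)) hθ

theorem statement12_general
    (d : ℕ) (α δ : ℝ) (hα0 : 0 < α) (hα1 : α < 1) (hδ1 : δ ≤ 1)
    (w : ℝ → ℝ → Vec d → ℝ) (hw : MemTheta2 α δ w) :
    ∀ t ∈ Set.Icc (0:ℝ) δ, ∀ i j : Fin d,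
      hN α 0 t (fun s y => ∫ θ in s..t, pyy i j w θ s y) ≤
        ENNReal.ofReal (4 * δ ^ (1 - α / 2)) * br2 α δ w := by
  obtain ⟨⟨-, -, -, -, hcont⟩, hfin⟩ := hw
  intro t ht i j
  have hg : ∀ θ ∈ Icc 0 δ, hN α 0 θ (pyy i j w θ) ≤ ENNReal.ofReal (br2 α δ w).toReal :=
    fun θ hθ => (hN_pyy_le_br2 w i j hθ).trans_eq (ENNReal.ofReal_toReal hfin.ne).symm
  calc hN α 0 t (fun s y => ∫ θ in s..t, pyy i j w θ s y)
      ≤ ENNReal.ofReal (4 * δ ^ (1 - α / 2) * (br2 α δ w).toReal) :=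
        hN_intervalIntegral_param_le ENNReal.toReal_nonneg hg ht.2 hα0.le (by linarith) hδ1
          (hcont i j) ht.1
    _ = ENNReal.ofReal (4 * δ ^ (1 - α / 2)) * br2 α δ w := by
      rw [ENNReal.ofReal_mul (mul_nonneg zero_le_four (Real.rpow_nonneg (ht.1.trans ht.2) _)),
        ENNReal.ofReal_toReal hfin.ne]

/-- Parabolic Hölder bound for diagonal integrals of second derivatives:
for `w ∈ Θ^{(2+α)}_{[0,δ]}` (with continuous slice derivatives) and every `t ∈ [0,δ]`,
`| ∫_·^t w_{y_iy_j}(θ,·,·) dθ |^{(α)}_{[0,t]×ℝ^d} ≤ 4 δ^{1−α/2} [w]^{(2+α)}_{[0,δ]}`. -/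
theorem statement12
    (d : ℕ) (hd : 1 ≤ d) (α T δ : ℝ) (hα0 : 0 < α) (hα1 : α < 1) (hT : 0 < T)
    (hδ0 : 0 < δ) (hδ1 : δ ≤ 1) (hδT : δ ≤ T)
    (w : ℝ → ℝ → Vec d → ℝ) (hw : MemTheta2 α δ w) :
    ∀ t ∈ Set.Icc (0:ℝ) δ, ∀ i j : Fin d,
      hN α 0 t (fun s y => ∫ θ in s..t, pyy i j w θ s y) ≤
        ENNReal.ofReal (4 * δ ^ (1 - α / 2)) * br2 α δ w :=
  statement12_general d α δ hα0 hα1 hδ1 w hw
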